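/- arXiv:0803.2122 — 2 statements merged into one kernel-verified Lean document; each statement's English description precedes it below -/
import Mathlib

section
/- Let ε = ε(k) be the unique solution in (0,1) of ε(2−ε)^{k−1} = 1. Then for all sufficiently large k, 2^{1−k} + k·4^{−k} < ε < 2^{1−k} + 3k·4^{−k}. -/
/-!
Put `n = k - 1` and `q = 2⁻ⁿ`, so that the equation reads `ε 2ⁿ (1 - ε/2)ⁿ = 1`. Bernoulli's
inequality, applied to `(1 + ε/2)ⁿ ≤ (1 - ε/2)⁻ⁿ` and to `(1 - ε/2)ⁿ`, brackets the root:
`q (1 + nε/2) ≤ ε` and `ε (1 - nε/2) ≤ q`. Applied to `(2 - ε)ⁿ = (1 + (1 - ε))ⁿ` it gives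
`nε ≤ 1`, which separates `ε` from the other root `ε = 1`. Hence `ε ≤ 8q/7` once `nq ≤ 1/8`,
and the brackets give `q + nq²/2 ≤ ε ≤ q + nε²/2 ≤ q + (32/49) nq²`; finally `nq → 0`.
-/

open Filter

section RootOfMulTwoSubPow

variable {n : ℕ} {ε : ℝ}

lemma nat_mul_le_one_of_mul_two_sub_pow_eq_one (hε₀ : 0 < ε) (hε₁ : ε < 1)
    (h : ε * (2 - ε) ^ n = 1) : n * ε ≤ 1 := by
  by_contra! hnε
  have hbern : 1 + n * (1 - ε) ≤ (2 - ε) ^ n := by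
    simpa [show (1 : ℝ) + (1 - ε) = 2 - ε by ring] using
      one_add_mul_le_pow (by linarith : (-2 : ℝ) ≤ 1 - ε) n
  -- `ε (1 + n (1 - ε)) - 1 = (1 - ε) (n ε - 1) > 0`
  nlinarith [mul_le_mul_of_nonneg_left hbern hε₀.le, mul_pos (sub_pos.2 hε₁) (sub_pos.2 hnε)]

lemma inv_two_pow_mul_one_add_le_of_mul_two_sub_pow_eq_one (hε₀ : 0 ≤ ε) (hε₂ : ε ≤ 2)
    (h : ε * (2 - ε) ^ n = 1) : ((2 : ℝ) ^ n)⁻¹ * (1 + n * (ε / 2)) ≤ ε := by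
  have hprod : (1 - ε / 2) ^ n * (1 + ε / 2) ^ n ≤ 1 := by
    rw [← mul_pow]
    exact pow_le_one₀ (by nlinarith) (by nlinarith)
  rw [inv_mul_le_iff₀ (by positivity)]
  calc 1 + n * (ε / 2) ≤ (1 + ε / 2) ^ n := one_add_mul_le_pow (by linarith) n
    _ = ε * (2 - ε) ^ n * (1 + ε / 2) ^ n := by rw [h, one_mul]
    _ = 2 ^ n * ε * ((1 - ε / 2) ^ n * (1 + ε / 2) ^ n) := by
      rw [show 2 - ε = 2 * (1 - ε / 2) by ring, mul_pow]; ring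
    _ ≤ 2 ^ n * ε := mul_le_of_le_one_right (by positivity) hprod

lemma mul_one_sub_le_inv_two_pow_of_mul_two_sub_pow_eq_one (hε₀ : 0 ≤ ε) (hε₄ : ε ≤ 4)
    (h : ε * (2 - ε) ^ n = 1) : ε * (1 - n * (ε / 2)) ≤ ((2 : ℝ) ^ n)⁻¹ := by
  have hbern : 1 - n * (ε / 2) ≤ (1 - ε / 2) ^ n := by
    simpa [sub_eq_add_neg] using one_add_mul_le_pow (by linarith : (-2 : ℝ) ≤ -(ε / 2)) n
  rw [← one_div, le_div_iff₀ (by positivity)]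
  calc ε * (1 - n * (ε / 2)) * 2 ^ n ≤ ε * (1 - ε / 2) ^ n * 2 ^ n := by gcongr
    _ = ε * (2 - ε) ^ n := by rw [show 2 - ε = 2 * (1 - ε / 2) by ring, mul_pow]; ring
    _ = 1 := h

end RootOfMulTwoSubPow

section Bracket

variable {N q ε : ℝ}

lemma add_mul_sq_lt_of_mul_one_add_le (hN : 1 < N) (hq : 0 < q) (hε : 0 ≤ ε)
    (h : q * (1 + N * (ε / 2)) ≤ ε) : q + (N + 1) * (q ^ 2 / 4) < ε := by
  have hqε : q ≤ ε := le_trans (le_mul_of_one_le_right hq.le (by nlinarith)) h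
  nlinarith [mul_le_mul_of_nonneg_left hqε (mul_pos (by linarith : (0 : ℝ) < N) hq).le,
    mul_pos (sub_pos.2 hN) (pow_pos hq 2)]

lemma lt_add_mul_sq_of_mul_one_sub_le (hN : 0 ≤ N) (hq : 0 < q) (hε : 0 ≤ ε)
    (hNq : N * q ≤ 1 / 8) (hNε : N * ε ≤ 1) (h : ε * (1 - N * (ε / 2)) ≤ q) :
    ε < q + 3 * (N + 1) * (q ^ 2 / 4) := by
  have hε2q : ε ≤ 2 * q := by nlinarith
  have hε8q : ε ≤ 8 / 7 * q := by nlinarith [mul_le_mul_of_nonneg_left hε2q (mul_nonneg hN hε)]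
  nlinarith [mul_le_mul hε8q hε8q hε (by positivity), pow_pos hq 2]

end Bracket

theorem bounds_of_mul_two_sub_pow_eq_one {n : ℕ} {ε : ℝ} (hn : 2 ≤ n)
    (hsmall : (n : ℝ) / 2 ^ n ≤ 1 / 8) (hε₀ : 0 < ε) (hε₁ : ε < 1) (h : ε * (2 - ε) ^ n = 1) :
    ((2 : ℝ) ^ n)⁻¹ + (n + 1) * (((2 : ℝ) ^ n)⁻¹ ^ 2 / 4) < ε ∧
      ε < ((2 : ℝ) ^ n)⁻¹ + 3 * (n + 1) * (((2 : ℝ) ^ n)⁻¹ ^ 2 / 4) := by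
  have hq : (0 : ℝ) < (2 ^ n)⁻¹ := by positivity
  exact ⟨add_mul_sq_lt_of_mul_one_add_le (by exact_mod_cast hn) hq hε₀.le
      (inv_two_pow_mul_one_add_le_of_mul_two_sub_pow_eq_one hε₀.le (by linarith) h),
    lt_add_mul_sq_of_mul_one_sub_le n.cast_nonneg hq hε₀.le hsmall
      (nat_mul_le_one_of_mul_two_sub_pow_eq_one hε₀ hε₁ h)
      (mul_one_sub_le_inv_two_pow_of_mul_two_sub_pow_eq_one hε₀.le (by linarith) h)⟩

/-- For all sufficiently large k, the solution ε ∈ (0,1) of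
ε(2−ε)^{k−1} = 1 satisfies 2^{1−k} + k·4^{−k} < ε < 2^{1−k} + 3k·4^{−k}. -/
theorem stmt7 : ∃ K : ℕ, ∀ k : ℕ, K ≤ k → ∀ ε : ℝ, ε ∈ Set.Ioo (0 : ℝ) 1 →
    ε * (2 - ε) ^ (k - 1) = 1 →
    (2 : ℝ) ^ ((1 : ℤ) - k) + k * (4 : ℝ) ^ (-(k : ℤ)) < ε ∧
      ε < (2 : ℝ) ^ ((1 : ℤ) - k) + 3 * k * (4 : ℝ) ^ (-(k : ℤ)) := by
  have hsmall : ∀ᶠ n : ℕ in atTop, (n : ℝ) / 2 ^ n ≤ 1 / 8 := by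
    simpa using (tendsto_pow_const_div_const_pow_of_one_lt 1 one_lt_two).eventually
      (ge_mem_nhds (by norm_num : (0 : ℝ) < 1 / 8))
  obtain ⟨K, hK⟩ := eventually_atTop.mp (hsmall.and (eventually_ge_atTop 2))
  refine ⟨K + 1, fun k hk ε ⟨hε₀, hε₁⟩ h => ?_⟩
  obtain ⟨n, rfl⟩ : ∃ n, k = n + 1 := ⟨k - 1, by omega⟩
  obtain ⟨hn, hn2⟩ := hK n (by omega)
  have h2 : (2 : ℝ) ^ ((1 : ℤ) - ↑(n + 1)) = ((2 : ℝ) ^ n)⁻¹ := by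
    rw [show (1 : ℤ) - ↑(n + 1) = -(n : ℤ) by push_cast; ring, zpow_neg, zpow_natCast]
  have h4 : (4 : ℝ) ^ (-((n + 1 : ℕ) : ℤ)) = ((2 : ℝ) ^ n)⁻¹ ^ 2 / 4 := by
    rw [zpow_neg, zpow_natCast, show (4 : ℝ) = 2 ^ 2 by norm_num, ← pow_mul, inv_pow, ← pow_mul,
      show 2 * (n + 1) = n * 2 + 2 by ring, pow_add]
    field_simp
  rw [h2, h4]
  push_cast
  exact bounds_of_mul_two_sub_pow_eq_one hn2 hn hε₀ hε₁ (by simpa using h)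
end

section
/- Let σ be a proper k-coloring of a graph G, let v₀ be a vertex and l ≠ σ(v₀) a target color. Suppose a process produces a set D of 'dead' vertices containing v₀ such that: (i) every neighbor of v₀ colored l is in D; (ii) every vertex w ∈ D, w ≠ v₀, has an assigned list L_w of at least 4 colors not containing l such that w has no neighbor outside D colored with any color of L_w, and all neighbors of w outside D colored with colors in L_w is empty; and (iii) the subgraph of G induced on D is 4-choosable. Then G has a proper k-coloring τ with τ(v₀) = l and τ agreeing with σ outside D; in particular dist(σ,τ) ≤ |D|. -/
/-!
Recolour only the dead set `D`: list-colour `G[D]` from the lists `L w` (any four colours at `v₀`),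
then overwrite `v₀` by `l`. Since `l ∉ L w`, the colour `l` at `v₀` clashes with no recoloured
neighbour, and by (i) with no neighbour outside `D`; by (ii) the recoloured vertices clash with no
vertex outside `D`. Keeping `σ` outside `D` therefore gives a proper colouring.
-/

namespace SimpleGraph

variable {V α : Type*} (G : SimpleGraph V)

def IsProperOn (c : V → α) (D : Finset V) : Prop :=
  ∀ u ∈ D, ∀ v ∈ D, G.Adj u v → c u ≠ c v

variable {G}

theorem IsProperOn.update [DecidableEq V] {c : V → α} {D : Finset V} (hc : G.IsProperOn c D)
    {v₀ : V} {a : α} (ha : ∀ w ∈ D, G.Adj v₀ w → c w ≠ a) :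
    G.IsProperOn (Function.update c v₀ a) D := by
  intro u hu v hv huv
  rcases eq_or_ne u v₀ with rfl | hu₀
  · simpa [huv.ne'] using (ha v hv huv).symm
  rcases eq_or_ne v v₀ with rfl | hv₀
  · simpa [hu₀] using ha u hu huv.symm
  simpa [hu₀, hv₀] using hc u hu v hv huv

theorem adj_piecewise_ne {σ c : V → α} {D : Finset V} [∀ v, Decidable (v ∈ D)]
    (hσ : ∀ u v, G.Adj u v → σ u ≠ σ v) (hc : G.IsProperOn c D)
    (hbd : ∀ u ∈ D, ∀ v ∉ D, G.Adj u v → c u ≠ σ v) :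
    ∀ u v, G.Adj u v → D.piecewise c σ u ≠ D.piecewise c σ v := by
  intro u v huv
  by_cases hu : u ∈ D <;> by_cases hv : v ∈ D <;>
    simp only [Finset.piecewise_eq_of_mem, Finset.piecewise_eq_of_notMem, hu, hv, not_false_eq_true]
  · exact hc u hu v hv huv
  · exact hbd u hu v hv huv
  · exact (hbd v hv u hu huv.symm).symm
  · exact hσ u v huv

end SimpleGraph

theorem Finset.card_filter_ne_le_of_forall_notMem_eq {V α : Type*} [Fintype V] [DecidableEq α]
    {τ σ : V → α} {D : Finset V} (h : ∀ v ∉ D, τ v = σ v) :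
    (Finset.univ.filter fun v => τ v ≠ σ v).card ≤ D.card :=
  Finset.card_le_card fun v hv => by_contra fun hvD => (Finset.mem_filter.mp hv).2 (h v hvD)

open SimpleGraph in
theorem stmt16_general {V : Type*} [Fintype V] (k : ℕ) (hk : 6 ≤ k)
    (G : SimpleGraph V) (σ : V → Fin k)
    (hσ : ∀ u v, G.Adj u v → σ u ≠ σ v)
    (v₀ : V) (l : Fin k)
    (D : Finset V) (hv₀ : v₀ ∈ D)
    (h1 : ∀ w, G.Adj v₀ w → σ w = l → w ∈ D)
    (L : V → Finset (Fin k))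
    (h2 : ∀ w ∈ D, w ≠ v₀ →
      4 ≤ (L w).card ∧ l ∉ L w ∧ ∀ u, u ∉ D → G.Adj w u → σ u ∉ L w)
    (h3 : ∀ L' : V → Finset (Fin k), (∀ v ∈ D, 4 ≤ (L' v).card) →
      ∃ c : V → Fin k, (∀ v ∈ D, c v ∈ L' v) ∧
        ∀ u ∈ D, ∀ v ∈ D, G.Adj u v → c u ≠ c v) :
    ∃ τ : V → Fin k, (∀ u v, G.Adj u v → τ u ≠ τ v) ∧ τ v₀ = l ∧
      (∀ v, v ∉ D → τ v = σ v) ∧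
      (Finset.univ.filter (fun v => τ v ≠ σ v)).card ≤ D.card := by
  classical
  obtain ⟨c, hcL, hc⟩ := h3 (Function.update L v₀ Finset.univ) fun v hv => by
    rcases eq_or_ne v v₀ with rfl | hv₀
    · simpa using hk.trans' (by norm_num)
    · simpa [hv₀] using (h2 v hv hv₀).1
  have hcL' : ∀ w ∈ D, w ≠ v₀ → c w ∈ L w := fun w hw hw₀ => by simpa [hw₀] using hcL w hw
  have hin : G.IsProperOn (Function.update c v₀ l) D :=
    IsProperOn.update hc fun w hw hw' hcw =>
      (h2 w hw hw'.ne').2.1 (hcw ▸ hcL' w hw hw'.ne')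
  have hbd : ∀ u ∈ D, ∀ v ∉ D, G.Adj u v → Function.update c v₀ l u ≠ σ v := by
    intro u hu v hv huv
    rcases eq_or_ne u v₀ with rfl | hu₀
    · simpa using fun hσv : l = σ v => hv (h1 v huv hσv.symm)
    · simpa [hu₀] using fun hcu : c u = σ v => (h2 u hu hu₀).2.2 v hv huv (hcu ▸ hcL' u hu hu₀)
  have hout : ∀ v ∉ D, D.piecewise (Function.update c v₀ l) σ v = σ v :=
    fun v hv => D.piecewise_eq_of_notMem _ _ hv
  exact ⟨_, adj_piecewise_ne hσ hin hbd, by simp [hv₀], hout,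
    Finset.card_filter_ne_le_of_forall_notMem_eq hout⟩

/-- Given a proper k-coloring σ of G, a vertex v₀, a target color
l ≠ σ(v₀), and a set D of "dead" vertices containing v₀ such that (i) all
neighbors of v₀ colored l lie in D, (ii) each w ∈ D, w ≠ v₀, has a list L w of
≥ 4 colors avoiding l with no neighbor of w outside D colored by a color of L w,
and (iii) the subgraph induced on D is 4-choosable, then G has a proper
k-coloring τ with τ(v₀) = l agreeing with σ outside D; in particular
dist(σ,τ) ≤ |D|. -/
theorem stmt16 {V : Type*} [Fintype V] [DecidableEq V] (k : ℕ) (hk : 6 ≤ k)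
    (G : SimpleGraph V) [DecidableRel G.Adj] (σ : V → Fin k)
    (hσ : ∀ u v, G.Adj u v → σ u ≠ σ v)
    (v₀ : V) (l : Fin k) (hl : l ≠ σ v₀)
    (D : Finset V) (hv₀ : v₀ ∈ D)
    (h1 : ∀ w, G.Adj v₀ w → σ w = l → w ∈ D)
    (L : V → Finset (Fin k))
    (h2 : ∀ w ∈ D, w ≠ v₀ →
      4 ≤ (L w).card ∧ l ∉ L w ∧ ∀ u, u ∉ D → G.Adj w u → σ u ∉ L w)
    (h3 : ∀ L' : V → Finset (Fin k), (∀ v ∈ D, 4 ≤ (L' v).card) →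
      ∃ c : V → Fin k, (∀ v ∈ D, c v ∈ L' v) ∧
        ∀ u ∈ D, ∀ v ∈ D, G.Adj u v → c u ≠ c v) :
    ∃ τ : V → Fin k, (∀ u v, G.Adj u v → τ u ≠ τ v) ∧ τ v₀ = l ∧
      (∀ v, v ∉ D → τ v = σ v) ∧
      (Finset.univ.filter (fun v => τ v ≠ σ v)).card ≤ D.card :=
  stmt16_general k hk G σ hσ v₀ l D hv₀ h1 L h2 h3
end
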